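/- arXiv:2211.07595 — 4 statements merged into one kernel-verified Lean document; each statement's English description precedes it below -/
import Mathlib

section
/- Let n₁,…,n_r be positive integers with N = n₁ + ⋯ + n_r even, let π be a pairing of {1,…,N} that respects the interval decomposition n₁ ⊗ ⋯ ⊗ n_r, and let f_j ∈ L²((0,∞)^{n_j}) for j = 1,…,r. Then the integral ∫_π f₁ ⊗ ⋯ ⊗ f_r converges absolutely and |∫_π f₁ ⊗ ⋯ ⊗ f_r| ≤ ‖f₁‖_{L²((0,∞)^{n₁})} ⋯ ‖f_r‖_{L²((0,∞)^{n_r})}. -/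
open MeasureTheory

/-- Lebesgue measure on `(0,∞)^k`, viewed as a measure on `Fin k → ℝ`. -/
noncomputable def posMeasure (k : ℕ) : Measure (Fin k → ℝ) :=
  Measure.pi fun _ => volume.restrict (Set.Ioi (0 : ℝ))

open Finset
open scoped ENNReal

/-- Finner-type inequality for pairings, by induction on the active coordinate set. -/
lemma pairing_key {δ ι : Type*} [DecidableEq δ] [Fintype ι]
    (μ : δ → Measure ℝ) [∀ i, SigmaFinite (μ i)] :
    ∀ (m : ℕ) (T : Finset δ), T.card = m →
    ∀ (S : ι → Finset δ), (∀ j, S j ⊆ T) →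
    ∀ (G : ι → (δ → ℝ) → ℝ≥0∞), (∀ j, Measurable (G j)) →
    (∀ (j : ι) (x y : δ → ℝ), (∀ c ∈ S j, x c = y c) → G j x = G j y) →
    (∀ c ∈ T, (Finset.univ.filter fun j => c ∈ S j).card = 2) →
    ∀ (x : δ → ℝ),
    (∫⋯∫⁻_T, (fun w => ∏ j, G j w) ∂μ) x
      ≤ ∏ j, ((∫⋯∫⁻_(S j), (fun w => G j w ^ (2:ℝ)) ∂μ) x) ^ (1/2 : ℝ) := by
  classical
  intro m
  induction m with
  | zero =>
    intro T hT S hS G hGm hGd _ x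
    rw [Finset.card_eq_zero] at hT
    subst hT
    have hSj : ∀ j, S j = ∅ := fun j => Finset.subset_empty.mp (hS j)
    simp only [hSj, lmarginal_empty]
    refine le_of_eq (Finset.prod_congr rfl fun j _ => ?_)
    rw [← ENNReal.rpow_mul]
    norm_num
  | succ m ih =>
    intro T hT S hS G hGm hGd hcount x
    have hTne : T.Nonempty := Finset.card_pos.mp (by omega)
    obtain ⟨c, hc⟩ := hTne
    obtain ⟨a, b, hab, hPab⟩ := Finset.card_eq_two.mp (hcount c hc)
    have hmem : ∀ j : ι, c ∈ S j ↔ j = a ∨ j = b := by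
      intro j
      have : c ∈ S j ↔ j ∈ ({a, b} : Finset ι) := by
        rw [← hPab]; simp
      rw [this]; simp
    have hca : c ∈ S a := (hmem a).mpr (Or.inl rfl)
    have hcb : c ∈ S b := (hmem b).mpr (Or.inr rfl)
    set T' : Finset δ := T.erase c with hT'
    set S' : ι → Finset δ := fun j => (S j).erase c with hS'
    set G' : ι → (δ → ℝ) → ℝ≥0∞ := fun j =>
      if c ∈ S j then
        fun w => ((∫⋯∫⁻_{c}, (fun v => G j v ^ (2:ℝ)) ∂μ) w) ^ (1/2 : ℝ)
      else G j with hG'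
    have hG'm : ∀ j, Measurable (G' j) := by
      intro j
      rw [hG']
      dsimp only
      split_ifs
      · exact (Measurable.lmarginal μ ((hGm j).pow measurable_const)).pow measurable_const
      · exact hGm j
    have hG'd : ∀ (j : ι) (y z : δ → ℝ), (∀ d ∈ S' j, y d = z d) → G' j y = G' j z := by
      intro j y z hyz
      rw [hG']
      dsimp only
      split_ifs with hcs
      · have hint : (∫⁻ t, G j (Function.update y c t) ^ (2:ℝ) ∂μ c)
            = ∫⁻ t, G j (Function.update z c t) ^ (2:ℝ) ∂μ c := by
          refine lintegral_congr fun t => ?_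
          congr 1
          refine hGd j _ _ fun d hd => ?_
          rcases eq_or_ne d c with rfl | hdc
          · simp
          · rw [Function.update_of_ne hdc, Function.update_of_ne hdc]
            exact hyz d (Finset.mem_erase.mpr ⟨hdc, hd⟩)
        rw [lmarginal_singleton]
        dsimp only
        exact congrArg (· ^ (1/2 : ℝ)) hint
      · refine hGd j _ _ fun d hd => ?_
        refine hyz d ?_
        rw [hS']
        exact Finset.mem_erase.mpr ⟨fun h => hcs (h ▸ hd), hd⟩
    have hprod_meas : Measurable fun w => ∏ j, G j w :=
      Finset.measurable_prod _ fun j _ => hGm j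
    have hba : b ∈ Finset.univ.erase a :=
      Finset.mem_erase.mpr ⟨Ne.symm hab, Finset.mem_univ b⟩
    have pointwise : ∀ w : δ → ℝ,
        (∫⁻ t, (fun v => ∏ j, G j v) (Function.update w c t) ∂μ c) ≤ ∏ j, G' j w := by
      intro w
      have hrest : ∀ t, ∀ j ∈ (Finset.univ.erase a).erase b,
          G j (Function.update w c t) = G j w := by
        intro t j hj
        rw [Finset.mem_erase, Finset.mem_erase] at hj
        refine hGd j _ _ fun d hd => ?_
        have hdc : d ≠ c := by
          rintro rfl
          rcases (hmem j).mp hd with rfl | rfl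
          · exact hj.2.1 rfl
          · exact hj.1 rfl
        exact Function.update_of_ne hdc _ _
      have hGa : G' a w
          = (∫⁻ t, G a (Function.update w c t) ^ (2:ℝ) ∂μ c) ^ (1/2 : ℝ) := by
        rw [hG']; simp only [hca, if_pos]; rw [lmarginal_singleton]
      have hGb : G' b w
          = (∫⁻ t, G b (Function.update w c t) ^ (2:ℝ) ∂μ c) ^ (1/2 : ℝ) := by
        rw [hG']; simp only [hcb, if_pos]; rw [lmarginal_singleton]
      have hpq : Real.HolderConjugate 2 2 := Real.HolderConjugate.two_two
      have hCS := ENNReal.lintegral_mul_le_Lp_mul_Lq (μ c) hpq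
        (f := fun t => G a (Function.update w c t))
        (g := fun t => G b (Function.update w c t))
        (((hGm a).comp (measurable_update _)).aemeasurable)
        (((hGm b).comp (measurable_update _)).aemeasurable)
      simp only [Pi.mul_apply] at hCS
      calc ∫⁻ t, (fun v => ∏ j, G j v) (Function.update w c t) ∂μ c
          = ∫⁻ t, (G a (Function.update w c t) * G b (Function.update w c t))
              * ∏ j ∈ (Finset.univ.erase a).erase b, G j w ∂μ c := by
            refine lintegral_congr fun t => ?_
            dsimp only
            rw [← Finset.mul_prod_erase _ _ (Finset.mem_univ a),
              ← Finset.mul_prod_erase _ _ hba,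
              Finset.prod_congr rfl (hrest t)]
            ring
        _ = (∫⁻ t, G a (Function.update w c t) * G b (Function.update w c t) ∂μ c)
              * ∏ j ∈ (Finset.univ.erase a).erase b, G j w := by
            refine lintegral_mul_const'' _ ?_
            exact (((hGm a).comp (measurable_update _)).mul
              ((hGm b).comp (measurable_update _))).aemeasurable
        _ ≤ (G' a w * G' b w) * ∏ j ∈ (Finset.univ.erase a).erase b, G j w := by
            rw [hGa, hGb]
            exact mul_le_mul_left hCS _
        _ = ∏ j, G' j w := by
            have hGrest : ∀ j ∈ (Finset.univ.erase a).erase b, G j w = G' j w := by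
              intro j hj
              rw [Finset.mem_erase, Finset.mem_erase] at hj
              have hcs : c ∉ S j := fun h => by
                rcases (hmem j).mp h with rfl | rfl
                · exact hj.2.1 rfl
                · exact hj.1 rfl
              rw [hG']
              simp [hcs]
            rw [Finset.prod_congr rfl hGrest,
              ← Finset.mul_prod_erase _ _ (Finset.mem_univ a),
              ← Finset.mul_prod_erase _ _ hba]
            ring
    have hT'card : T'.card = m := by
      rw [hT', Finset.card_erase_of_mem hc, hT]
      omega
    have hS'sub : ∀ j, S' j ⊆ T' := fun j => Finset.erase_subset_erase _ (hS j)
    have hcount' : ∀ d ∈ T', (Finset.univ.filter fun j => d ∈ S' j).card = 2 := by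
      intro d hd
      have hdc : d ≠ c := (Finset.mem_erase.mp hd).1
      have heq : (Finset.univ.filter fun j => d ∈ S' j)
          = Finset.univ.filter fun j => d ∈ S j := by
        refine Finset.filter_congr fun j _ => ?_
        rw [hS']
        simp [Finset.mem_erase, hdc]
      rw [heq]
      exact hcount d (Finset.mem_erase.mp hd).2
    have hIH := ih T' hT'card S' hS'sub G' hG'm hG'd hcount' x
    have hnorm : ∀ j, (∫⋯∫⁻_(S' j), (fun w => G' j w ^ (2:ℝ)) ∂μ) x
        = (∫⋯∫⁻_(S j), (fun w => G j w ^ (2:ℝ)) ∂μ) x := by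
      intro j
      by_cases hcs : c ∈ S j
      · have hG'j : (fun w => G' j w ^ (2:ℝ))
            = (∫⋯∫⁻_{c}, (fun v => G j v ^ (2:ℝ)) ∂μ) := by
          funext w
          rw [hG']
          simp only [hcs, if_pos]
          rw [← ENNReal.rpow_mul]
          norm_num
        have hSj : S' j = (S j).erase c := rfl
        rw [hG'j, hSj,
          lmarginal_erase' _ ((hGm j).pow measurable_const) hcs,
          lmarginal_singleton]
      · have h1 : S' j = S j := by
          simp only [hS']; exact Finset.erase_eq_of_notMem hcs
        have h2 : G' j = G j := by rw [hG']; simp [hcs]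
        rw [h1, h2]
    calc (∫⋯∫⁻_T, (fun w => ∏ j, G j w) ∂μ) x
        = (∫⋯∫⁻_T', (fun w => ∫⁻ t,
            (fun v => ∏ j, G j v) (Function.update w c t) ∂μ c) ∂μ) x := by
          rw [lmarginal_erase' _ hprod_meas hc]
      _ ≤ (∫⋯∫⁻_T', (fun w => ∏ j, G' j w) ∂μ) x :=
          lmarginal_mono (fun w => pointwise w) x
      _ ≤ ∏ j, ((∫⋯∫⁻_(S' j), (fun w => G' j w ^ (2:ℝ)) ∂μ) x) ^ (1/2 : ℝ) := hIH
      _ = ∏ j, ((∫⋯∫⁻_(S j), (fun w => G j w ^ (2:ℝ)) ∂μ) x) ^ (1/2 : ℝ) :=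
          Finset.prod_congr rfl fun j _ => by rw [hnorm j]

/-- Integrating a function of the coordinates `e i` over those coordinates equals the integral
over `(0,∞)^m`. -/
lemma lmarginal_reindex {m k : ℕ} (e : Fin m → Fin k) (he : Function.Injective e)
    (F : (Fin m → ℝ) → ℝ≥0∞) (hF : Measurable F) (x : Fin k → ℝ) :
    (∫⋯∫⁻_(Finset.univ.image e), (fun w => F (fun i => w (e i)))
      ∂(fun _ => volume.restrict (Set.Ioi (0:ℝ)))) x
      = ∫⁻ v, F v ∂posMeasure m := by
  have h := lmarginal_image (μ := fun _ : Fin k => volume.restrict (Set.Ioi (0:ℝ)))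
    he Finset.univ hF x
  rw [show (fun w : Fin k → ℝ => F (fun i => w (e i)))
      = F ∘ (· ∘' e) from rfl, h, lmarginal_univ]
  rfl

/-- The projection `(0,∞)^k → (0,∞)^m` along an injection is quasi-measure-preserving. -/
lemma qmp_proj {m k : ℕ} (e : Fin m → Fin k) (he : Function.Injective e) :
    Measure.QuasiMeasurePreserving (fun w : Fin k → ℝ => fun i => w (e i))
      (posMeasure k) (posMeasure m) := by
  classical
  have hmeas : Measurable (fun w : Fin k → ℝ => fun i => w (e i)) :=
    measurable_pi_lambda _ fun i => measurable_pi_apply _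
  set p : Fin k → Prop := fun c => c ∈ Set.range e with hp
  letI : DecidablePred p := Classical.decPred p
  letI : Fintype (Subtype p) := Subtype.fintype p
  let q := MeasurableEquiv.piEquivPiSubtypeProd (fun _ : Fin k => ℝ) p
  have hq := measurePreserving_piEquivPiSubtypeProd
    (fun _ : Fin k => volume.restrict (Set.Ioi (0:ℝ))) p
  let e' : Fin m ≃ Subtype p := Equiv.ofInjective e he
  let E := MeasurableEquiv.piCongrLeft (fun _ : Subtype p => ℝ) e'
  have hE : MeasurePreserving E.symm
      (Measure.pi fun _ : Subtype p => volume.restrict (Set.Ioi (0:ℝ)))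
      (Measure.pi fun _ : Fin m => volume.restrict (Set.Ioi (0:ℝ))) :=
    (measurePreserving_piCongrLeft (fun _ : Subtype p => volume.restrict (Set.Ioi (0:ℝ))) e').symm
  have hcomp : (fun w : Fin k → ℝ => fun i => w (e i))
      = E.symm ∘ Prod.fst ∘ q := by
    funext w
    simp only [Function.comp_apply]
    funext i
    have : E.symm (Prod.fst (q w)) i = (Prod.fst (q w)) (e' i) := by
      simp [E, MeasurableEquiv.piCongrLeft, Equiv.piCongrLeft_symm_apply]
    rw [this]
    rfl
  constructor
  · exact hmeas
  · unfold posMeasure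
    rw [hcomp]
    rw [← Function.comp_assoc]
    rw [← Measure.map_map (E.symm.measurable.comp measurable_fst) q.measurable]
    rw [hq.map_eq]
    rw [← Measure.map_map E.symm.measurable measurable_fst]
    rw [Measure.map_fst_prod]
    rw [Measure.map_smul]
    rw [hE.map_eq]
    intro s hs
    rw [Measure.smul_apply, hs, smul_zero]

/-- Let `n₁,…,n_r ≥ 1` with `n₁ + ⋯ + n_r = 2k` even, and let `π` be a pairing of the index set
`{1,…,N}` (encoded by the block-labelling map `b` onto `Fin k`, all fibers of cardinality `2`)
respecting the interval decomposition `n₁ ⊗ ⋯ ⊗ n_r` (no block meets an interval twice).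
For `f_j ∈ L²((0,∞)^{n_j})`, the pairing integral `∫_π f₁ ⊗ ⋯ ⊗ f_r` (the integral over
`(0,∞)^{N/2}` of the product with variables identified along blocks) converges absolutely and
`|∫_π f₁ ⊗ ⋯ ⊗ f_r| ≤ ‖f₁‖₂ ⋯ ‖f_r‖₂`. -/
theorem pairing_integral_le_prod_norms (r : ℕ) (n : Fin r → ℕ) (hn : ∀ j, 1 ≤ n j)
    (k : ℕ) (hN : ∑ j, n j = 2 * k)
    (b : ((j : Fin r) × Fin (n j)) → Fin k)
    (hb : ∀ c : Fin k, Nat.card {x : (j : Fin r) × Fin (n j) // b x = c} = 2)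
    (hresp : ∀ x y : (j : Fin r) × Fin (n j), b x = b y → x ≠ y → x.1 ≠ y.1)
    (f : (j : Fin r) → (Fin (n j) → ℝ) → ℂ)
    (hf : ∀ j, MemLp (f j) 2 (posMeasure (n j))) :
    Integrable (fun w : Fin k → ℝ => ∏ j : Fin r, f j fun i => w (b ⟨j, i⟩)) (posMeasure k)
    ∧ ‖∫ w : Fin k → ℝ, ∏ j : Fin r, f j (fun i => w (b ⟨j, i⟩)) ∂posMeasure k‖
        ≤ ∏ j : Fin r, (eLpNorm (f j) 2 (posMeasure (n j))).toReal := by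
  classical
  have hinj : ∀ j : Fin r, Function.Injective fun i : Fin (n j) => b ⟨j, i⟩ := by
    intro j i i' h
    by_contra hne
    refine hresp ⟨j, i⟩ ⟨j, i'⟩ h (fun hx => ?_) rfl
    obtain ⟨-, hh⟩ := Sigma.mk.inj_iff.mp hx
    exact hne (eq_of_heq hh)
  set e : (j : Fin r) → Fin (n j) → Fin k := fun j i => b ⟨j, i⟩ with he
  set proj : (j : Fin r) → (Fin k → ℝ) → (Fin (n j) → ℝ) := fun j w i => w (e j i) with hproj
  have hprojm : ∀ j, Measurable (proj j) :=
    fun j => measurable_pi_lambda _ fun i => measurable_pi_apply _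
  set g : (j : Fin r) → (Fin (n j) → ℝ) → ℂ := fun j => (hf j).1.mk (f j) with hg
  have hgsm : ∀ j, StronglyMeasurable (g j) := fun j => (hf j).1.stronglyMeasurable_mk
  have hgae : ∀ j, f j =ᵐ[posMeasure (n j)] g j := fun j => (hf j).1.ae_eq_mk
  have hqmp : ∀ j, Measure.QuasiMeasurePreserving (proj j) (posMeasure k) (posMeasure (n j)) :=
    fun j => qmp_proj (e j) (hinj j)
  have hae : ∀ j, (fun w => f j (proj j w)) =ᵐ[posMeasure k] (fun w => g j (proj j w)) :=
    fun j => (hqmp j).ae_eq_comp (hgae j)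
  have haeprod : (fun w : Fin k → ℝ => ∏ j, f j (proj j w))
      =ᵐ[posMeasure k] (fun w => ∏ j, g j (proj j w)) := by
    have hall : ∀ᵐ w ∂posMeasure k, ∀ j, f j (proj j w) = g j (proj j w) :=
      ae_all_iff.mpr fun j => hae j
    filter_upwards [hall] with w hw
    exact Finset.prod_congr rfl fun j _ => hw j
  set G : Fin r → (Fin k → ℝ) → ℝ≥0∞ := fun j w => (‖g j (proj j w)‖₊ : ℝ≥0∞) with hG
  have hGm : ∀ j, Measurable (G j) :=
    fun j => ((hgsm j).measurable.comp (hprojm j)).nnnorm.coe_nnreal_ennreal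
  set S : Fin r → Finset (Fin k) := fun j => Finset.univ.image (e j) with hS
  have hGd : ∀ (j : Fin r) (x y : Fin k → ℝ), (∀ c ∈ S j, x c = y c) → G j x = G j y := by
    intro j x y hxy
    have hpp : proj j x = proj j y :=
      funext fun i => hxy _ (Finset.mem_image_of_mem _ (Finset.mem_univ i))
    simp only [hG, hpp]
  have hcount : ∀ c ∈ (Finset.univ : Finset (Fin k)),
      (Finset.univ.filter fun j => c ∈ S j).card = 2 := by
    intro c _
    obtain ⟨x, y, hxy, hxyuniv⟩ := Nat.card_eq_two_iff.mp (hb c)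
    have hxys : ∀ z : {z : (j : Fin r) × Fin (n j) // b z = c}, z = x ∨ z = y := by
      intro z
      have hz : z ∈ ({x, y} : Set _) := hxyuniv ▸ Set.mem_univ z
      simpa using hz
    have hne : (x : (j : Fin r) × Fin (n j)).1 ≠ (y : (j : Fin r) × Fin (n j)).1 :=
      hresp x.1 y.1 (x.2.trans y.2.symm) (Subtype.val_injective.ne hxy)
    have hfilter : (Finset.univ.filter fun j => c ∈ S j)
        = {(x : (j : Fin r) × Fin (n j)).1, (y : (j : Fin r) × Fin (n j)).1} := by
      ext j
      simp only [Finset.mem_filter, Finset.mem_univ, true_and, Finset.mem_insert,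
        Finset.mem_singleton, hS, Finset.mem_image]
      constructor
      · rintro ⟨i, hbi⟩
        rcases hxys ⟨⟨j, i⟩, hbi⟩ with h | h
        · exact Or.inl (congrArg Sigma.fst (congrArg Subtype.val h))
        · exact Or.inr (congrArg Sigma.fst (congrArg Subtype.val h))
      · rintro (rfl | rfl)
        · exact ⟨(x : (j : Fin r) × Fin (n j)).2,
            by show b ⟨_, _⟩ = c; rw [Sigma.eta]; exact x.2⟩
        · exact ⟨(y : (j : Fin r) × Fin (n j)).2,
            by show b ⟨_, _⟩ = c; rw [Sigma.eta]; exact y.2⟩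
    rw [hfilter, Finset.card_insert_of_notMem (by simpa using hne), Finset.card_singleton]
  -- apply the key inequality
  have hkey := pairing_key (ι := Fin r) (fun _ : Fin k => volume.restrict (Set.Ioi (0:ℝ)))
    (Finset.univ.card) Finset.univ rfl S (fun j => Finset.subset_univ _) G hGm hGd hcount
    (fun _ => 0)
  have hstart : ∫⁻ w, ∏ j, G j w ∂posMeasure k
      = (∫⋯∫⁻_Finset.univ, (fun w => ∏ j, G j w)
          ∂(fun _ : Fin k => volume.restrict (Set.Ioi (0:ℝ)))) (fun _ => 0) :=
    lintegral_eq_lmarginal_univ (fun _ => 0)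
  have hnormeq : ∀ j, (∫⋯∫⁻_(S j), (fun w => G j w ^ (2:ℝ))
        ∂(fun _ : Fin k => volume.restrict (Set.Ioi (0:ℝ)))) (fun _ => 0)
      = ∫⁻ v, (‖g j v‖₊ : ℝ≥0∞) ^ (2:ℝ) ∂posMeasure (n j) := by
    intro j
    exact lmarginal_reindex (e j) (hinj j) (fun v => (‖g j v‖₊ : ℝ≥0∞) ^ (2:ℝ))
      ((hgsm j).measurable.nnnorm.coe_nnreal_ennreal.pow measurable_const) _
  have hsnorm : ∀ j, eLpNorm (f j) 2 (posMeasure (n j))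
      = (∫⁻ v, (‖g j v‖₊ : ℝ≥0∞) ^ (2:ℝ) ∂posMeasure (n j)) ^ (1/2 : ℝ) := by
    intro j
    rw [eLpNorm_congr_ae (hgae j),
      eLpNorm_eq_lintegral_rpow_enorm_toReal (by norm_num) (by norm_num)]
    norm_num
    simp only [enorm_eq_nnnorm]
  have hmain : ∫⁻ w, ∏ j, G j w ∂posMeasure k
      ≤ ∏ j, eLpNorm (f j) 2 (posMeasure (n j)) := by
    rw [hstart]
    refine le_trans hkey (le_of_eq (Finset.prod_congr rfl fun j _ => ?_))
    rw [hnormeq j, hsnorm j]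
  have henorm : ∫⁻ w, (‖∏ j, f j (proj j w)‖₊ : ℝ≥0∞) ∂posMeasure k
      = ∫⁻ w, ∏ j, G j w ∂posMeasure k := by
    refine lintegral_congr_ae ?_
    filter_upwards [haeprod] with w hw
    rw [hw, nnnorm_prod, ENNReal.coe_finset_prod]
  have hfin : ∏ j, eLpNorm (f j) 2 (posMeasure (n j)) < ⊤ :=
    ENNReal.prod_lt_top fun j _ => (hf j).2
  have hm0 : Measurable (fun w : Fin k → ℝ => ∏ j, g j (proj j w)) :=
    Finset.measurable_prod _ fun j _ => (hgsm j).measurable.comp (hprojm j)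
  have haesm : AEStronglyMeasurable (fun w : Fin k → ℝ => ∏ j, f j (proj j w)) (posMeasure k) :=
    hm0.aestronglyMeasurable.congr haeprod.symm
  have hint : Integrable (fun w : Fin k → ℝ => ∏ j, f j (proj j w)) (posMeasure k) := by
    refine ⟨haesm, ?_⟩
    rw [HasFiniteIntegral]
    simp only [enorm_eq_nnnorm]
    rw [henorm]
    exact lt_of_le_of_lt hmain hfin
  refine ⟨hint, ?_⟩
  calc ‖∫ w, ∏ j, f j (proj j w) ∂posMeasure k‖
      ≤ (∫⁻ w, ENNReal.ofReal ‖∏ j, f j (proj j w)‖ ∂posMeasure k).toReal :=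
        norm_integral_le_lintegral_norm _
    _ ≤ (∏ j, eLpNorm (f j) 2 (posMeasure (n j))).toReal := by
        refine ENNReal.toReal_mono hfin.ne ?_
        refine le_trans (le_of_eq ?_) (henorm ▸ hmain)
        exact lintegral_congr fun w => ofReal_norm _
    _ = ∏ j, (eLpNorm (f j) 2 (posMeasure (n j))).toReal := ENNReal.toReal_prod _ _
end

section
/- Let p ≥ 2 be an integer, let 0 ≤ l ≤ p − 2, and let f, g ∈ L²((0,∞)^p) be mirror-symmetric. Define Φ on (0,∞)^{2(p−l−1)} by Φ(t₁,…,t_{p−l−1}, r₁,…,r_{p−l−1}) = ∫_{(0,∞)^{l+1}} f(t₁,…,t_{p−l−1}, s_l,…,s₁, t) · conj( g(r_{p−l−1},…,r₁, s_l,…,s₁, t) ) ds₁⋯ds_l dt. Then Φ ∈ L²((0,∞)^{2(p−l−1)}) and ‖Φ‖²_{L²((0,∞)^{2(p−l−1)})} ≤ ‖f ⌢_{p−l−1} f‖_{L²((0,∞)^{2l+2})} · ‖g‖²_{L²((0,∞)^p)}. -/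
open MeasureTheory

open Measure ComplexConjugate
open scoped ENNReal NNReal

instance (k : ℕ) : SigmaFinite (posMeasure k) := by unfold posMeasure; infer_instance

section helpers
variable {α β γ δ : Type*} [MeasurableSpace α] [MeasurableSpace β] [MeasurableSpace γ]
  [MeasurableSpace δ]

lemma qmp_prodMap {μa : Measure α} {μb : Measure β} {μc : Measure γ} {μd : Measure δ}
    [SFinite μa] [SFinite μc] {f : α → β} {g : γ → δ}
    (hf : QuasiMeasurePreserving f μa μb) (hg : QuasiMeasurePreserving g μc μd)
    [SFinite μd] :
    QuasiMeasurePreserving (Prod.map f g) (μa.prod μc) (μb.prod μd) := by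
  refine ⟨hf.measurable.prodMap hg.measurable, ?_⟩
  rw [← Measure.map_prod_map _ _ hf.measurable hg.measurable]
  exact hf.absolutelyContinuous.prod hg.absolutelyContinuous

lemma qmp_fst {μ : Measure α} {ν : Measure β} [SFinite ν] :
    QuasiMeasurePreserving (Prod.fst : α × β → α) (μ.prod ν) μ :=
  quasiMeasurePreserving_fst

lemma qmp_11 {μa : Measure α} {μb : Measure β} {ν : Measure γ} [SFinite μa] [SFinite μb]
    [SFinite ν] :
    QuasiMeasurePreserving (fun p : (α × β) × γ => (p.1.1, p.2)) ((μa.prod μb).prod ν)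
      (μa.prod ν) :=
  qmp_prodMap quasiMeasurePreserving_fst (MeasurePreserving.id ν).quasiMeasurePreserving

lemma qmp_12 {μa : Measure α} {μb : Measure β} {ν : Measure γ} [SFinite μa] [SFinite μb]
    [SFinite ν] :
    QuasiMeasurePreserving (fun p : (α × β) × γ => (p.1.2, p.2)) ((μa.prod μb).prod ν)
      (μb.prod ν) :=
  qmp_prodMap quasiMeasurePreserving_snd (MeasurePreserving.id ν).quasiMeasurePreserving

/-- a.e.-strong measurability of a "kernel" built from two L²-type functions. -/
lemma aesm_kernel {μ : Measure α} {ν : Measure β} [SigmaFinite μ] [SigmaFinite ν]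
    {F G : α × β → ℂ} (hF : AEStronglyMeasurable F (μ.prod ν))
    (hG : AEStronglyMeasurable G (μ.prod ν)) :
    AEStronglyMeasurable
      (fun ww' : β × β => ∫ t, F (t, ww'.1) * (starRingEnd ℂ) (G (t, ww'.2)) ∂μ)
      (ν.prod ν) := by
  have h1 : AEStronglyMeasurable (fun p : (β × β) × α => F (p.2, p.1.1))
      ((ν.prod ν).prod μ) := by
    have : QuasiMeasurePreserving (fun p : (β × β) × α => (p.2, p.1.1))
        ((ν.prod ν).prod μ) (μ.prod ν) :=
      (measurePreserving_swap (μ:=ν) (ν:=μ)).quasiMeasurePreserving.comp qmp_11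
    exact hF.comp_quasiMeasurePreserving this
  have h2 : AEStronglyMeasurable (fun p : (β × β) × α => G (p.2, p.1.2))
      ((ν.prod ν).prod μ) := by
    have : QuasiMeasurePreserving (fun p : (β × β) × α => (p.2, p.1.2))
        ((ν.prod ν).prod μ) (μ.prod ν) :=
      (measurePreserving_swap (μ:=ν) (ν:=μ)).quasiMeasurePreserving.comp qmp_12
    exact hG.comp_quasiMeasurePreserving this
  exact (h1.mul (RCLike.continuous_conj.comp_aestronglyMeasurable h2)).integral_prod_right'

end helpers


lemma appendMP (m n : ℕ) :
    MeasurePreserving (fun z : (Fin m → ℝ) × (Fin n → ℝ) => Fin.append z.1 z.2)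
      ((posMeasure m).prod (posMeasure n)) (posMeasure (m + n)) := by
  have mp1 := measurePreserving_sumPiEquivProdPi_symm
    (fun _ : Fin m ⊕ Fin n => (volume.restrict (Set.Ioi (0 : ℝ))))
  have mp2 := measurePreserving_piCongrLeft
    (fun _ : Fin (m + n) => (volume.restrict (Set.Ioi (0 : ℝ)))) finSumFinEquiv
  have h := mp2.comp mp1
  have hfun : (⇑(MeasurableEquiv.piCongrLeft (fun _ : Fin (m + n) => ℝ) finSumFinEquiv) ∘
      ⇑(MeasurableEquiv.sumPiEquivProdPi (fun _ : Fin m ⊕ Fin n => ℝ)).symm)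
      = fun z : (Fin m → ℝ) × (Fin n → ℝ) => Fin.append z.1 z.2 := by
    funext z i
    obtain ⟨s, rfl⟩ := finSumFinEquiv.surjective i
    rw [Function.comp_apply, MeasurableEquiv.coe_piCongrLeft,
      Equiv.piCongrLeft_apply_apply]
    cases s with
    | inl j =>
        simp [MeasurableEquiv.coe_sumPiEquivProdPi_symm, Equiv.sumPiEquivProdPi,
          finSumFinEquiv_apply_left, Fin.append_left]
    | inr j =>
        simp [MeasurableEquiv.coe_sumPiEquivProdPi_symm, Equiv.sumPiEquivProdPi,
          finSumFinEquiv_apply_right, Fin.append_right]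
  rw [hfun] at h
  exact h

lemma revMP (k : ℕ) :
    MeasurePreserving (fun x : Fin k → ℝ => x ∘ Fin.rev) (posMeasure k) (posMeasure k) := by
  have h := measurePreserving_piCongrLeft
    (fun _ : Fin k => (volume.restrict (Set.Ioi (0 : ℝ)))) (Fin.revPerm : Fin k ≃ Fin k)
  have hfun : ⇑(MeasurableEquiv.piCongrLeft (fun _ : Fin k => ℝ) (Fin.revPerm : Fin k ≃ Fin k))
      = fun x : Fin k → ℝ => x ∘ Fin.rev := by
    funext x i
    have h2 := Equiv.piCongrLeft_apply_apply (fun _ : Fin k => ℝ)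
      (Fin.revPerm : Fin k ≃ Fin k) x (Fin.rev i)
    rw [MeasurableEquiv.coe_piCongrLeft]
    simpa [Fin.rev_rev] using h2
  rw [hfun] at h
  exact h

lemma castMP {m n : ℕ} (h : m = n) :
    MeasurePreserving (fun y : Fin n → ℝ => y ∘ Fin.cast h) (posMeasure n) (posMeasure m) := by
  subst h
  simp only [Fin.cast_refl, Function.comp_id]
  exact MeasurePreserving.id (posMeasure m)


section helpers
variable {α β : Type*} [MeasurableSpace α] [MeasurableSpace β]

lemma lint_CS (μ : Measure α) {f g : α → ℝ≥0∞} (hf : AEMeasurable f μ) (hg : AEMeasurable g μ) :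
    ∫⁻ x, f x * g x ∂μ
      ≤ (∫⁻ x, f x ^ (2 : ℝ) ∂μ) ^ (1 / 2 : ℝ) * (∫⁻ x, g x ^ (2 : ℝ) ∂μ) ^ (1 / 2 : ℝ) :=
  ENNReal.lintegral_mul_le_Lp_mul_Lq μ Real.HolderConjugate.two_two hf hg

lemma lint_sq (f : α → ℂ) (μ : Measure α) :
    ∫⁻ x, (‖f x‖₊ : ℝ≥0∞) ^ (2 : ℝ) ∂μ = eLpNorm f 2 μ ^ 2 := by
  rw [eLpNorm_eq_lintegral_rpow_enorm_toReal (by norm_num) (by norm_num)]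
  rw [← ENNReal.rpow_natCast _ 2, ← ENNReal.rpow_mul]
  norm_num
  rfl

lemma half_rpow_sq (a b : ℝ≥0∞) :
    (a ^ (1 / 2 : ℝ) * b ^ (1 / 2 : ℝ)) ^ (2 : ℝ) = a * b := by
  rw [ENNReal.mul_rpow_of_nonneg _ _ (by norm_num), ← ENNReal.rpow_mul, ← ENNReal.rpow_mul]
  norm_num

lemma half_rpow_sq' (a b : ℝ≥0∞) :
    a ^ (1 / 2 : ℝ) * b ^ (1 / 2 : ℝ) * (a ^ (1 / 2 : ℝ) * b ^ (1 / 2 : ℝ)) = a * b := by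
  have := half_rpow_sq a b
  rwa [show (2 : ℝ) = ((2 : ℕ) : ℝ) by norm_num, ENNReal.rpow_natCast, sq] at this

end helpers

section kernel
variable {α β : Type*} [MeasurableSpace α] [MeasurableSpace β]

lemma kernel_bound {μ : Measure α} {ν : Measure β} [SigmaFinite μ] [SigmaFinite ν]
    {H : α × β → ℂ} (hHm : Measurable H) (hH : MemLp H 2 (μ.prod ν)) :
    eLpNorm (fun ww' : β × β => ∫ t, H (t, ww'.1) * conj (H (t, ww'.2)) ∂μ) 2 (ν.prod ν)
      ≤ eLpNorm H 2 (μ.prod ν) ^ 2 := by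
  set ψ : β → ℝ≥0∞ := fun w => ∫⁻ t, (‖H (t, w)‖₊ : ℝ≥0∞) ^ (2 : ℝ) ∂μ with hψ
  have msec : ∀ w : β, Measurable fun t : α => (‖H (t, w)‖₊ : ℝ≥0∞) := fun w =>
    (hHm.comp (measurable_id.prodMk measurable_const)).nnnorm.coe_nnreal_ennreal
  -- pointwise bound on the kernel
  have hptw : ∀ ww' : β × β,
      (‖∫ t, H (t, ww'.1) * conj (H (t, ww'.2)) ∂μ‖₊ : ℝ≥0∞)
        ≤ ψ ww'.1 ^ (1 / 2 : ℝ) * ψ ww'.2 ^ (1 / 2 : ℝ) := by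
    intro ww'
    refine (enorm_integral_le_lintegral_enorm _).trans ?_
    have : ∀ t : α, (‖H (t, ww'.1) * conj (H (t, ww'.2))‖₊ : ℝ≥0∞)
        = (‖H (t, ww'.1)‖₊ : ℝ≥0∞) * (‖H (t, ww'.2)‖₊ : ℝ≥0∞) := by
      intro t; simp [nnnorm_mul]
    simp only [enorm_eq_nnnorm]
    rw [lintegral_congr this]
    exact lint_CS μ (msec ww'.1).aemeasurable (msec ww'.2).aemeasurable
  -- integrate the square of the bound
  have hψint : ∫⁻ w, ψ w ∂ν = eLpNorm H 2 (μ.prod ν) ^ 2 := by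
    rw [← lint_sq H (μ.prod ν), lintegral_prod_symm _ (hHm.nnnorm.coe_nnreal_ennreal.pow_const _).aemeasurable]
  have h1 : ∫⁻ ww' : β × β, (‖∫ t, H (t, ww'.1) * conj (H (t, ww'.2)) ∂μ‖₊ : ℝ≥0∞) ^ (2 : ℝ)
      ∂(ν.prod ν) ≤ ∫⁻ ww' : β × β, ψ ww'.1 * ψ ww'.2 ∂(ν.prod ν) := by
    refine lintegral_mono fun ww' => ?_
    calc (‖∫ t, H (t, ww'.1) * conj (H (t, ww'.2)) ∂μ‖₊ : ℝ≥0∞) ^ (2 : ℝ)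
        ≤ (ψ ww'.1 ^ (1 / 2 : ℝ) * ψ ww'.2 ^ (1 / 2 : ℝ)) ^ (2 : ℝ) :=
          ENNReal.rpow_le_rpow (hptw ww') (by norm_num)
      _ = ψ ww'.1 * ψ ww'.2 := half_rpow_sq _ _
  have mψ : Measurable ψ := by
    have : Measurable fun p : β × α => (‖H (p.2, p.1)‖₊ : ℝ≥0∞) ^ (2 : ℝ) :=
      ((hHm.comp (measurable_snd.prodMk measurable_fst)).nnnorm.coe_nnreal_ennreal).pow_const _
    exact this.lintegral_prod_right'
  have h2 : ∫⁻ ww' : β × β, ψ ww'.1 * ψ ww'.2 ∂(ν.prod ν)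
      = (eLpNorm H 2 (μ.prod ν) ^ 2) * (eLpNorm H 2 (μ.prod ν) ^ 2) := by
    rw [lintegral_prod_mul mψ.aemeasurable mψ.aemeasurable, hψint]
  rw [eLpNorm_eq_lintegral_rpow_enorm_toReal (by norm_num) (by norm_num)]
  have : (∫⁻ ww' : β × β,
      (‖∫ t, H (t, ww'.1) * conj (H (t, ww'.2)) ∂μ‖₊ : ℝ≥0∞) ^ ((2:ℝ≥0∞).toReal) ∂(ν.prod ν))
      ≤ (eLpNorm H 2 (μ.prod ν) ^ 2) ^ (2 : ℕ) := by
    simpa [ENNReal.toReal_ofNat, sq] using h1.trans_eq h2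
  calc (∫⁻ ww' : β × β,
      (‖∫ t, H (t, ww'.1) * conj (H (t, ww'.2)) ∂μ‖₊ : ℝ≥0∞) ^ ((2:ℝ≥0∞).toReal) ∂(ν.prod ν))
        ^ (1 / (2:ℝ≥0∞).toReal)
      ≤ ((eLpNorm H 2 (μ.prod ν) ^ 2) ^ (2 : ℕ)) ^ (1 / (2:ℝ≥0∞).toReal) :=
        ENNReal.rpow_le_rpow this (by norm_num)
    _ = eLpNorm H 2 (μ.prod ν) ^ 2 := by
        rw [← ENNReal.rpow_natCast _ 2, ← ENNReal.rpow_mul]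
        norm_num

end kernel

section core
variable {α β : Type*} [MeasurableSpace α] [MeasurableSpace β]

theorem core' {μ : Measure α} {ν : Measure β} [SigmaFinite μ] [SigmaFinite ν]
    {F G : α × β → ℂ} (hFm : Measurable F) (hGm : Measurable G)
    (hF : MemLp F 2 (μ.prod ν)) (hG : MemLp G 2 (μ.prod ν)) :
    MemLp (fun z : α × α => ∫ w, F (z.1, w) * conj (G (z.2, w)) ∂ν) 2 (μ.prod μ)
    ∧ (eLpNorm (fun z : α × α => ∫ w, F (z.1, w) * conj (G (z.2, w)) ∂ν) 2 (μ.prod μ)) ^ 2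
      ≤ eLpNorm (fun ww' : β × β => ∫ t, F (t, ww'.1) * conj (F (t, ww'.2)) ∂μ) 2 (ν.prod ν)
        * (eLpNorm G 2 (μ.prod ν)) ^ 2 := by
  -- notation
  set h : (α × α) × β → ℂ := fun p => F (p.1.1, p.2) * conj (G (p.1.2, p.2)) with hh
  have mh : Measurable h :=
    (hFm.comp ((measurable_fst.comp measurable_fst).prodMk measurable_snd)).mul
      ((RCLike.continuous_conj.measurable).comp
        (hGm.comp ((measurable_snd.comp measurable_fst).prodMk measurable_snd)))
  set Φ : α × α → ℂ := fun z => ∫ w, F (z.1, w) * conj (G (z.2, w)) ∂ν with hΦdef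
  have hΦh : Φ = fun z => ∫ w, h (z, w) ∂ν := rfl
  have mΦ : StronglyMeasurable Φ := by
    rw [hΦh]; exact mh.stronglyMeasurable.integral_prod_right'
  set φ : α → ℝ≥0∞ := fun t => ∫⁻ w, (‖F (t, w)‖₊ : ℝ≥0∞) ^ (2 : ℝ) ∂ν with hφ
  set ψ : α → ℝ≥0∞ := fun t => ∫⁻ w, (‖G (t, w)‖₊ : ℝ≥0∞) ^ (2 : ℝ) ∂ν with hψ
  have mφ : Measurable φ := (hFm.nnnorm.coe_nnreal_ennreal.pow_const _).lintegral_prod_right'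
  have mψ : Measurable ψ := (hGm.nnnorm.coe_nnreal_ennreal.pow_const _).lintegral_prod_right'
  have mFsec : ∀ t : α, Measurable fun w : β => (‖F (t, w)‖₊ : ℝ≥0∞) := fun t =>
    (hFm.comp (measurable_const.prodMk measurable_id)).nnnorm.coe_nnreal_ennreal
  have mGsec : ∀ t : α, Measurable fun w : β => (‖G (t, w)‖₊ : ℝ≥0∞) := fun t =>
    (hGm.comp (measurable_const.prodMk measurable_id)).nnnorm.coe_nnreal_ennreal
  -- Cauchy–Schwarz on the inner integral
  have hCS : ∀ z : α × α, ∫⁻ w, (‖h (z, w)‖₊ : ℝ≥0∞) ∂ν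
      ≤ φ z.1 ^ (1 / 2 : ℝ) * ψ z.2 ^ (1 / 2 : ℝ) := by
    intro z
    have : ∀ w : β, (‖h (z, w)‖₊ : ℝ≥0∞)
        = (‖F (z.1, w)‖₊ : ℝ≥0∞) * (‖G (z.2, w)‖₊ : ℝ≥0∞) := by
      intro w; simp [hh, nnnorm_mul]
    rw [lintegral_congr this]
    exact lint_CS ν (mFsec z.1).aemeasurable (mGsec z.2).aemeasurable
  have hΦ_le : ∀ z : α × α, (‖Φ z‖₊ : ℝ≥0∞) ≤ φ z.1 ^ (1 / 2 : ℝ) * ψ z.2 ^ (1 / 2 : ℝ) := by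
    intro z
    exact (enorm_integral_le_lintegral_enorm _).trans (hCS z)
  have hS : ∫⁻ z : α × α, φ z.1 * ψ z.2 ∂(μ.prod μ)
      = eLpNorm F 2 (μ.prod ν) ^ 2 * eLpNorm G 2 (μ.prod ν) ^ 2 := by
    rw [lintegral_prod_mul mφ.aemeasurable mψ.aemeasurable, hφ, hψ]
    rw [← lint_sq F (μ.prod ν), ← lint_sq G (μ.prod ν),
      lintegral_prod _ (hFm.nnnorm.coe_nnreal_ennreal.pow_const _).aemeasurable,
      lintegral_prod _ (hGm.nnnorm.coe_nnreal_ennreal.pow_const _).aemeasurable]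
  have hSfin : ∫⁻ z : α × α, φ z.1 * ψ z.2 ∂(μ.prod μ) < ⊤ := by
    rw [hS]
    exact ENNReal.mul_lt_top (ENNReal.pow_lt_top hF.2) (ENNReal.pow_lt_top hG.2)
  -- Part 1 : MemLp Φ
  have hΦsq : ∫⁻ z, (‖Φ z‖₊ : ℝ≥0∞) ^ (2 : ℝ) ∂(μ.prod μ)
      ≤ ∫⁻ z : α × α, φ z.1 * ψ z.2 ∂(μ.prod μ) := by
    refine lintegral_mono fun z => ?_
    calc (‖Φ z‖₊ : ℝ≥0∞) ^ (2 : ℝ)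
        ≤ (φ z.1 ^ (1 / 2 : ℝ) * ψ z.2 ^ (1 / 2 : ℝ)) ^ (2 : ℝ) :=
          ENNReal.rpow_le_rpow (hΦ_le z) (by norm_num)
      _ = φ z.1 * ψ z.2 := half_rpow_sq _ _
  have memΦ : MemLp Φ 2 (μ.prod μ) := by
    refine ⟨mΦ.aestronglyMeasurable, ?_⟩
    rw [eLpNorm_eq_lintegral_rpow_enorm_toReal (by norm_num) (by norm_num)]
    refine ENNReal.rpow_lt_top_of_nonneg (by norm_num) ?_
    simpa [ENNReal.toReal_ofNat, enorm_eq_nnnorm] using (hΦsq.trans_lt hSfin).ne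
  refine ⟨memΦ, ?_⟩
  -- kernels
  set A : β × β → ℂ := fun ww' => ∫ t, F (t, ww'.1) * conj (F (t, ww'.2)) ∂μ with hA
  set B : β × β → ℂ := fun ww' => ∫ t, G (t, ww'.1) * conj (G (t, ww'.2)) ∂μ with hB
  have mA : StronglyMeasurable A := by
    have : Measurable fun p : (β × β) × α => F (p.2, p.1.1) * conj (F (p.2, p.1.2)) :=
      (hFm.comp (measurable_snd.prodMk (measurable_fst.comp measurable_fst))).mul
        ((RCLike.continuous_conj.measurable).comp
          (hFm.comp (measurable_snd.prodMk (measurable_snd.comp measurable_fst))))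
    exact this.stronglyMeasurable.integral_prod_right'
  have mB : StronglyMeasurable B := by
    have : Measurable fun p : (β × β) × α => G (p.2, p.1.1) * conj (G (p.2, p.1.2)) :=
      (hGm.comp (measurable_snd.prodMk (measurable_fst.comp measurable_fst))).mul
        ((RCLike.continuous_conj.measurable).comp
          (hGm.comp (measurable_snd.prodMk (measurable_snd.comp measurable_fst))))
    exact this.stronglyMeasurable.integral_prod_right'
  -- the four-variable function and its integrability
  set e : (α × α) × (β × β) → ℂ := fun p => h (p.1, p.2.1) * conj (h (p.1, p.2.2)) with he
  have me : Measurable e :=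
    (mh.comp (measurable_fst.prodMk (measurable_fst.comp measurable_snd))).mul
      ((RCLike.continuous_conj.measurable).comp
        (mh.comp (measurable_fst.prodMk (measurable_snd.comp measurable_snd))))
  have mhsec : ∀ z : α × α, Measurable fun w : β => (‖h (z, w)‖₊ : ℝ≥0∞) := fun z =>
    (mh.comp (measurable_const.prodMk measurable_id)).nnnorm.coe_nnreal_ennreal
  have hInt : Integrable e ((μ.prod μ).prod (ν.prod ν)) := by
    refine ⟨me.aestronglyMeasurable, ?_⟩
    show ∫⁻ p, (‖e p‖₊ : ℝ≥0∞) ∂((μ.prod μ).prod (ν.prod ν)) < ⊤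
    rw [lintegral_prod _ me.nnnorm.coe_nnreal_ennreal.aemeasurable]
    calc ∫⁻ z, ∫⁻ ww', (‖e (z, ww')‖₊ : ℝ≥0∞) ∂(ν.prod ν) ∂(μ.prod μ)
        ≤ ∫⁻ z : α × α, φ z.1 * ψ z.2 ∂(μ.prod μ) := by
          refine lintegral_mono fun z => ?_
          have h1 : ∀ ww' : β × β, (‖e (z, ww')‖₊ : ℝ≥0∞)
              = (fun w => (‖h (z, w)‖₊ : ℝ≥0∞)) ww'.1 *
                (fun w => (‖h (z, w)‖₊ : ℝ≥0∞)) ww'.2 := by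
            intro ww'; simp [he, nnnorm_mul]
          rw [lintegral_congr h1,
            lintegral_prod_mul (mhsec z).aemeasurable (mhsec z).aemeasurable]
          calc (∫⁻ w, (‖h (z, w)‖₊ : ℝ≥0∞) ∂ν) * ∫⁻ w, (‖h (z, w)‖₊ : ℝ≥0∞) ∂ν
              ≤ (φ z.1 ^ (1 / 2 : ℝ) * ψ z.2 ^ (1 / 2 : ℝ)) *
                  (φ z.1 ^ (1 / 2 : ℝ) * ψ z.2 ^ (1 / 2 : ℝ)) :=
                mul_le_mul' (hCS z) (hCS z)
            _ = φ z.1 * ψ z.2 := half_rpow_sq' _ _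
      _ < ⊤ := hSfin
  -- step 1 : pointwise identity in `z`
  have step1 : ∀ z : α × α, Φ z * conj (Φ z) = ∫ ww' : β × β, e (z, ww') ∂(ν.prod ν) := by
    intro z
    have h2 := integral_prod_mul (μ := ν) (ν := ν) (fun w => h (z, w)) (fun w => conj (h (z, w)))
    rw [integral_conj] at h2
    exact h2.symm
  -- step 2 : Fubini
  have step2 : ∫ z, Φ z * conj (Φ z) ∂(μ.prod μ)
      = ∫ ww', A ww' * conj (B ww') ∂(ν.prod ν) := by
    calc ∫ z, Φ z * conj (Φ z) ∂(μ.prod μ)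
        = ∫ z, ∫ ww' : β × β, e (z, ww') ∂(ν.prod ν) ∂(μ.prod μ) :=
          integral_congr_ae (.of_forall step1)
      _ = ∫ ww' : β × β, ∫ z, e (z, ww') ∂(μ.prod μ) ∂(ν.prod ν) :=
          integral_integral_swap hInt
      _ = ∫ ww', A ww' * conj (B ww') ∂(ν.prod ν) := by
          refine integral_congr_ae (.of_forall fun ww' => ?_)
          show ∫ z, e (z, ww') ∂(μ.prod μ) = A ww' * conj (B ww')
          have h3 : (fun z : α × α => e (z, ww'))
              = fun z : α × α => (fun t => F (t, ww'.1) * conj (F (t, ww'.2))) z.1 *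
                  (fun r => conj (G (r, ww'.1)) * G (r, ww'.2)) z.2 := by
            funext z
            simp only [he, hh, map_mul, RingHomCompTriple.comp_apply, RCLike.conj_conj,
              RingHom.id_apply]
            ring
          have h4 := integral_prod_mul (μ := μ) (ν := μ)
            (fun t => F (t, ww'.1) * conj (F (t, ww'.2)))
            (fun r => conj (G (r, ww'.1)) * G (r, ww'.2))
          rw [h3, h4]
          congr 1
          rw [← integral_conj]
          refine integral_congr_ae (.of_forall fun r => ?_)
          simp only [map_mul, RCLike.conj_conj]
  -- the real quantity
  set P : ℝ := ∫ z, ‖Φ z‖ ^ 2 ∂(μ.prod μ) with hP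
  have hPnn : 0 ≤ P := integral_nonneg fun z => sq_nonneg _
  have hint : Integrable (fun z => ‖Φ z‖ ^ 2) (μ.prod μ) := by
    have h4 := memΦ.integrable_norm_rpow (by norm_num) (by norm_num)
    have h5 : ∀ z : α × α, ‖Φ z‖ ^ ((2 : ℝ≥0∞).toReal) = ‖Φ z‖ ^ 2 := by
      intro z
      rw [ENNReal.toReal_ofNat, show ((2:ℝ)) = ((2:ℕ):ℝ) by norm_num, Real.rpow_natCast]
    simpa only [h5] using h4
  have hPc : ((P : ℝ) : ℂ) = ∫ ww', A ww' * conj (B ww') ∂(ν.prod ν) := by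
    rw [← step2]
    have h7 : ∀ z : α × α, Φ z * conj (Φ z) = ((‖Φ z‖ ^ 2 : ℝ) : ℂ) := by
      intro z; rw [RCLike.mul_conj]; norm_cast
    rw [integral_congr_ae (.of_forall h7)]
    exact integral_ofReal.symm
  have h1 : P ≤ ‖∫ ww', A ww' * conj (B ww') ∂(ν.prod ν)‖ := by
    rw [← hPc, Complex.norm_real, Real.norm_eq_abs]
    exact le_abs_self P
  have hP_le : P ≤ ∫ ww', ‖A ww'‖ * ‖B ww'‖ ∂(ν.prod ν) := by
    refine h1.trans ((norm_integral_le_integral_norm _).trans (le_of_eq ?_))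
    refine integral_congr_ae (.of_forall fun ww' => ?_)
    show ‖A ww' * conj (B ww')‖ = ‖A ww'‖ * ‖B ww'‖
    rw [norm_mul, RCLike.norm_conj]
  -- pass to `ℝ≥0∞`
  have hofP : eLpNorm Φ 2 (μ.prod μ) ^ 2 = ENNReal.ofReal P := by
    rw [← lint_sq Φ (μ.prod μ)]
    have h6 : ∀ z : α × α, (‖Φ z‖₊ : ℝ≥0∞) ^ (2 : ℝ) = ENNReal.ofReal (‖Φ z‖ ^ 2) := by
      intro z
      rw [ENNReal.ofReal_pow (norm_nonneg _), ofReal_norm, enorm_eq_nnnorm,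
        ← ENNReal.rpow_natCast]
      norm_num
    rw [lintegral_congr h6, hP,
      ← ofReal_integral_eq_lintegral_ofReal hint (.of_forall fun z => sq_nonneg _)]
  have hAB : ENNReal.ofReal (∫ ww', ‖A ww'‖ * ‖B ww'‖ ∂(ν.prod ν))
      ≤ ∫⁻ ww', (‖A ww'‖₊ : ℝ≥0∞) * (‖B ww'‖₊ : ℝ≥0∞) ∂(ν.prod ν) := by
    by_cases hqi : Integrable (fun ww' => ‖A ww'‖ * ‖B ww'‖) (ν.prod ν)
    · rw [ofReal_integral_eq_lintegral_ofReal hqi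
        (.of_forall fun ww' => mul_nonneg (norm_nonneg _) (norm_nonneg _))]
      refine le_of_eq (lintegral_congr fun ww' => ?_)
      rw [ENNReal.ofReal_mul (norm_nonneg _), ofReal_norm, enorm_eq_nnnorm,
        ofReal_norm, enorm_eq_nnnorm]
    · rw [integral_undef hqi]
      simp
  have hCS2 : ∫⁻ ww', (‖A ww'‖₊ : ℝ≥0∞) * (‖B ww'‖₊ : ℝ≥0∞) ∂(ν.prod ν)
      ≤ eLpNorm A 2 (ν.prod ν) * eLpNorm B 2 (ν.prod ν) := by
    refine (lint_CS (ν.prod ν) mA.measurable.nnnorm.coe_nnreal_ennreal.aemeasurable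
      mB.measurable.nnnorm.coe_nnreal_ennreal.aemeasurable).trans (le_of_eq ?_)
    rw [lint_sq, lint_sq]
    congr 1 <;>
      · rw [← ENNReal.rpow_natCast _ 2, ← ENNReal.rpow_mul]
        norm_num
  calc eLpNorm Φ 2 (μ.prod μ) ^ 2 = ENNReal.ofReal P := hofP
    _ ≤ ENNReal.ofReal (∫ ww', ‖A ww'‖ * ‖B ww'‖ ∂(ν.prod ν)) := ENNReal.ofReal_le_ofReal hP_le
    _ ≤ ∫⁻ ww', (‖A ww'‖₊ : ℝ≥0∞) * (‖B ww'‖₊ : ℝ≥0∞) ∂(ν.prod ν) := hAB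
    _ ≤ eLpNorm A 2 (ν.prod ν) * eLpNorm B 2 (ν.prod ν) := hCS2
    _ ≤ eLpNorm A 2 (ν.prod ν) * eLpNorm G 2 (μ.prod ν) ^ 2 :=
        mul_le_mul_right (kernel_bound hGm hG) _

end core



/-- Let `p = q + (l + 1) ≥ 2` (so `0 ≤ l ≤ p − 2` and `q = p − l − 1 ≥ 1`), and let
`f, g ∈ L²((0,∞)^p)` be mirror-symmetric.  Define
`Φ(t₁,…,t_q, r₁,…,r_q) = ∫ f(t₁,…,t_q, s_l,…,s₁, s) conj(g(r_q,…,r₁, s_l,…,s₁, s)) ds₁⋯ds_l ds`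
(the inner integration variable is the common tail `w = (s_l,…,s₁,s) ∈ (0,∞)^{l+1}`).
Then `Φ ∈ L²((0,∞)^{2(p−l−1)})` and `‖Φ‖₂² ≤ ‖f ⌢_{p−l−1} f‖₂ · ‖g‖₂²`. -/
theorem contraction_term_sq_norm_le (q l : ℕ) (hq : 1 ≤ q)
    (f g : (Fin (q + (l + 1)) → ℝ) → ℂ)
    (hf : MemLp f 2 (posMeasure (q + (l + 1))))
    (hg : MemLp g 2 (posMeasure (q + (l + 1))))
    (hfm : ∀ᵐ x ∂posMeasure (q + (l + 1)), f x = starRingEnd ℂ (f fun i => x (Fin.rev i)))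
    (hgm : ∀ᵐ x ∂posMeasure (q + (l + 1)), g x = starRingEnd ℂ (g fun i => x (Fin.rev i))) :
    MemLp (fun tr : (Fin q → ℝ) × (Fin q → ℝ) =>
        ∫ w : Fin (l + 1) → ℝ,
          f (Fin.append tr.1 w)
            * starRingEnd ℂ (g (Fin.append (fun i : Fin q => tr.2 (Fin.rev i)) w))
          ∂posMeasure (l + 1))
      2 ((posMeasure q).prod (posMeasure q))
    ∧ (eLpNorm (fun tr : (Fin q → ℝ) × (Fin q → ℝ) =>
          ∫ w : Fin (l + 1) → ℝ,
            f (Fin.append tr.1 w)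
              * starRingEnd ℂ (g (Fin.append (fun i : Fin q => tr.2 (Fin.rev i)) w))
            ∂posMeasure (l + 1))
        2 ((posMeasure q).prod (posMeasure q))) ^ 2
      ≤ eLpNorm (fun xy : (Fin (l + 1) → ℝ) × (Fin (l + 1) → ℝ) =>
            ∫ s : Fin q → ℝ,
              f ((Fin.append xy.1 fun j : Fin q => s (Fin.rev j)) ∘
                  Fin.cast (by omega : q + (l + 1) = (l + 1) + q))
                * f (Fin.append s xy.2) ∂posMeasure q)
          2 ((posMeasure (l + 1)).prod (posMeasure (l + 1)))
        * (eLpNorm g 2 (posMeasure (q + (l + 1)))) ^ 2 := by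
  have hcast : q + (l + 1) = (l + 1) + q := Nat.add_comm _ _
  set μ := posMeasure q with hμ
  set ν := posMeasure (l + 1) with hν
  set π := posMeasure (q + (l + 1)) with hπ
  -- measurable representatives
  set f' : (Fin (q + (l + 1)) → ℝ) → ℂ := hf.1.mk f with hf'def
  set g' : (Fin (q + (l + 1)) → ℝ) → ℂ := hg.1.mk g with hg'def
  have hf'meas : Measurable f' := hf.1.stronglyMeasurable_mk.measurable
  have hg'meas : Measurable g' := hg.1.stronglyMeasurable_mk.measurable
  have hff' : f =ᵐ[π] f' := hf.1.ae_eq_mk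
  have hgg' : g =ᵐ[π] g' := hg.1.ae_eq_mk
  have hfM : MemLp f' 2 π := hf.ae_eq hff'
  have hgM : MemLp g' 2 π := hg.ae_eq hgg'
  -- measure preserving maps
  have apMP := appendMP q (l + 1)
  have apMP2 := appendMP (l + 1) q
  have rq := revMP q
  have rl := revMP (l + 1)
  have gmapMP : MeasurePreserving
      (fun z : (Fin q → ℝ) × (Fin (l + 1) → ℝ) => Fin.append (z.1 ∘ Fin.rev) z.2)
      (μ.prod ν) π := apMP.comp (rq.prod (MeasurePreserving.id ν))
  -- inputs for the abstract core lemma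
  set F : (Fin q → ℝ) × (Fin (l + 1) → ℝ) → ℂ := fun z => f' (Fin.append z.1 z.2) with hFdef
  set Gm : (Fin q → ℝ) × (Fin (l + 1) → ℝ) → ℂ := fun z => g' (Fin.append (z.1 ∘ Fin.rev) z.2)
    with hGmdef
  have hFmem : MemLp F 2 (μ.prod ν) := hfM.comp_measurePreserving apMP
  have hGmem : MemLp Gm 2 (μ.prod ν) := hgM.comp_measurePreserving gmapMP
  have hFm : Measurable F := hf'meas.comp apMP.measurable
  have hGmm : Measurable Gm := hg'meas.comp gmapMP.measurable
  obtain ⟨mem', bound'⟩ := core' (μ := μ) (ν := ν) hFm hGmm hFmem hGmem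
  -- the statement's Φ agrees a.e. with the primed one
  have qmpF : QuasiMeasurePreserving
      (fun p : ((Fin q → ℝ) × (Fin q → ℝ)) × (Fin (l + 1) → ℝ) => Fin.append p.1.1 p.2)
      ((μ.prod μ).prod ν) π := apMP.quasiMeasurePreserving.comp qmp_11
  have qmpG : QuasiMeasurePreserving
      (fun p : ((Fin q → ℝ) × (Fin q → ℝ)) × (Fin (l + 1) → ℝ) =>
        Fin.append (p.1.2 ∘ Fin.rev) p.2)
      ((μ.prod μ).prod ν) π := gmapMP.quasiMeasurePreserving.comp qmp_12
  have hu : (fun p : ((Fin q → ℝ) × (Fin q → ℝ)) × (Fin (l + 1) → ℝ) =>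
        f (Fin.append p.1.1 p.2) * conj (g (Fin.append (p.1.2 ∘ Fin.rev) p.2)))
      =ᵐ[(μ.prod μ).prod ν]
      (fun p => f' (Fin.append p.1.1 p.2) * conj (g' (Fin.append (p.1.2 ∘ Fin.rev) p.2))) :=
    (qmpF.ae_eq hff').mul ((qmpG.ae_eq hgg').fun_comp conj)
  have eqΦ : (fun tr : (Fin q → ℝ) × (Fin q → ℝ) =>
        ∫ w : Fin (l + 1) → ℝ,
          f (Fin.append tr.1 w)
            * starRingEnd ℂ (g (Fin.append (fun i : Fin q => tr.2 (Fin.rev i)) w)) ∂ν)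
      =ᵐ[μ.prod μ]
      (fun z : (Fin q → ℝ) × (Fin q → ℝ) => ∫ w, F (z.1, w) * conj (Gm (z.2, w)) ∂ν) := by
    filter_upwards [ae_ae_of_ae_prod hu] with z hz
    exact integral_congr_ae hz
  -- the statement's kernel agrees a.e. with the primed kernel composed with a
  -- measure-preserving map
  set A : (Fin (l + 1) → ℝ) × (Fin (l + 1) → ℝ) → ℂ :=
    fun ww' => ∫ t, F (t, ww'.1) * conj (F (t, ww'.2)) ∂μ with hAdef
  have mA : AEStronglyMeasurable A (ν.prod ν) := aesm_kernel hFmem.1 hFmem.1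
  have hf'mir : ∀ᵐ x ∂π, f' x = conj (f' (x ∘ Fin.rev)) := by
    have h3 : (fun x : Fin (q + (l + 1)) → ℝ => f (x ∘ Fin.rev))
        =ᵐ[π] (fun x => f' (x ∘ Fin.rev)) :=
      (revMP (q + (l + 1))).quasiMeasurePreserving.ae_eq hff'
    filter_upwards [hfm, hff', h3] with x e1 e2 e3
    rw [← e2, ← e3]
    exact e1
  have σMP : MeasurePreserving
      (fun p : (Fin (l + 1) → ℝ) × (Fin q → ℝ) => Fin.append p.2 (p.1 ∘ Fin.rev))
      (ν.prod μ) π :=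
    apMP.comp (((MeasurePreserving.id μ).prod rl).comp Measure.measurePreserving_swap)
  have comp_rev_rev : ∀ {k : ℕ} (x : Fin k → ℝ), (x ∘ Fin.rev) ∘ Fin.rev = x := by
    intro k x; funext i; simp [Function.comp, Fin.rev_rev]
  have hmir : ∀ᵐ p : (Fin (l + 1) → ℝ) × (Fin q → ℝ) ∂ν.prod μ,
      conj (f' (Fin.append p.2 (p.1 ∘ Fin.rev)))
        = f' ((Fin.append p.1 (p.2 ∘ Fin.rev)) ∘ Fin.cast hcast) := by
    have h4 := σMP.quasiMeasurePreserving.ae hf'mir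
    filter_upwards [h4] with p hp
    rw [hp, RCLike.conj_conj, Fin.append_comp_rev, comp_rev_rev]
  have h5 := ae_ae_of_ae_prod hmir
  have h6 : ∀ᵐ xy : (Fin (l + 1) → ℝ) × (Fin (l + 1) → ℝ) ∂ν.prod ν, ∀ᵐ t ∂μ,
      conj (f' (Fin.append t (xy.1 ∘ Fin.rev)))
        = f' ((Fin.append xy.1 (t ∘ Fin.rev)) ∘ Fin.cast hcast) :=
    quasiMeasurePreserving_fst.ae h5
  have qmpK1 : QuasiMeasurePreserving
      (fun p : ((Fin (l + 1) → ℝ) × (Fin (l + 1) → ℝ)) × (Fin q → ℝ) =>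
        (Fin.append p.1.1 (p.2 ∘ Fin.rev)) ∘ Fin.cast hcast)
      ((ν.prod ν).prod μ) π :=
    ((castMP hcast).comp (apMP2.comp
      ((MeasurePreserving.id ν).prod rq))).quasiMeasurePreserving.comp qmp_11
  have qmpK2 : QuasiMeasurePreserving
      (fun p : ((Fin (l + 1) → ℝ) × (Fin (l + 1) → ℝ)) × (Fin q → ℝ) =>
        Fin.append p.2 p.1.2)
      ((ν.prod ν).prod μ) π :=
    (apMP.comp Measure.measurePreserving_swap).quasiMeasurePreserving.comp qmp_12
  have hKu : (fun p : ((Fin (l + 1) → ℝ) × (Fin (l + 1) → ℝ)) × (Fin q → ℝ) =>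
        f ((Fin.append p.1.1 (p.2 ∘ Fin.rev)) ∘ Fin.cast hcast) * f (Fin.append p.2 p.1.2))
      =ᵐ[(ν.prod ν).prod μ]
      (fun p => f' ((Fin.append p.1.1 (p.2 ∘ Fin.rev)) ∘ Fin.cast hcast)
        * f' (Fin.append p.2 p.1.2)) :=
    (qmpK1.ae_eq hff').mul (qmpK2.ae_eq hff')
  have eqK : (fun xy : (Fin (l + 1) → ℝ) × (Fin (l + 1) → ℝ) =>
        ∫ s : Fin q → ℝ,
          f ((Fin.append xy.1 fun j : Fin q => s (Fin.rev j)) ∘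
              Fin.cast (by omega : q + (l + 1) = (l + 1) + q))
            * f (Fin.append s xy.2) ∂μ)
      =ᵐ[ν.prod ν] (fun xy => A (xy.2, xy.1 ∘ Fin.rev)) := by
    filter_upwards [ae_ae_of_ae_prod hKu, h6] with xy h7 h8
    calc ∫ s : Fin q → ℝ,
          f ((Fin.append xy.1 fun j : Fin q => s (Fin.rev j)) ∘
              Fin.cast (by omega : q + (l + 1) = (l + 1) + q))
            * f (Fin.append s xy.2) ∂μ
        = ∫ s, f' ((Fin.append xy.1 (s ∘ Fin.rev)) ∘ Fin.cast hcast)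
            * f' (Fin.append s xy.2) ∂μ := integral_congr_ae h7
      _ = ∫ s, f' (Fin.append s xy.2)
            * conj (f' (Fin.append s (xy.1 ∘ Fin.rev))) ∂μ := by
          refine integral_congr_ae (h8.mono fun s hs => ?_)
          show f' ((Fin.append xy.1 (s ∘ Fin.rev)) ∘ Fin.cast hcast) * f' (Fin.append s xy.2)
            = f' (Fin.append s xy.2) * conj (f' (Fin.append s (xy.1 ∘ Fin.rev)))
          rw [← hs]; ring
      _ = A (xy.2, xy.1 ∘ Fin.rev) := rfl
  have τMP : MeasurePreserving
      (fun xy : (Fin (l + 1) → ℝ) × (Fin (l + 1) → ℝ) => (xy.2, xy.1 ∘ Fin.rev))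
      (ν.prod ν) (ν.prod ν) :=
    (((MeasurePreserving.id ν).prod rl).comp Measure.measurePreserving_swap)
  have eqKnorm : eLpNorm (fun xy : (Fin (l + 1) → ℝ) × (Fin (l + 1) → ℝ) =>
        ∫ s : Fin q → ℝ,
          f ((Fin.append xy.1 fun j : Fin q => s (Fin.rev j)) ∘
              Fin.cast (by omega : q + (l + 1) = (l + 1) + q))
            * f (Fin.append s xy.2) ∂μ) 2 (ν.prod ν)
      = eLpNorm A 2 (ν.prod ν) := by
    rw [eLpNorm_congr_ae eqK]
    exact eLpNorm_comp_measurePreserving mA τMP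
  have eqGnorm : eLpNorm Gm 2 (μ.prod ν) = eLpNorm g 2 π := by
    rw [show Gm = g' ∘ (fun z : (Fin q → ℝ) × (Fin (l + 1) → ℝ) =>
        Fin.append (z.1 ∘ Fin.rev) z.2) from rfl,
      eLpNorm_comp_measurePreserving hgM.1 gmapMP]
    exact (eLpNorm_congr_ae hgg').symm
  constructor
  · exact mem'.ae_eq eqΦ.symm
  · rw [eLpNorm_congr_ae eqΦ, eqKnorm]
    rw [← eqGnorm]
    exact bound'
end

section
/- Let C be an n × n real symmetric positive definite matrix and let t > 0. Then the matrix I − exp(−2t·C⁻¹) is symmetric positive definite, its (unique symmetric positive semidefinite) square root (I − exp(−2t·C⁻¹))^{1/2} is invertible, and ‖((I − exp(−2t·C⁻¹))^{1/2})⁻¹‖ = (1 − e^{−2t/‖C‖})^{−1/2}. -/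
open scoped Matrix.Norms.L2Operator

open scoped ComplexOrder in
/-- The old Mathlib `Matrix.PosSemidef.sqrt` (removed since), with its original definition. -/
noncomputable def Matrix.PosSemidef.sqrt {n : Type*} {𝕜 : Type*} [Fintype n] [RCLike 𝕜]
    [DecidableEq n] {A : Matrix n n 𝕜} (hA : Matrix.PosSemidef A) : Matrix n n 𝕜 :=
  hA.1.eigenvectorUnitary.1 * Matrix.diagonal ((↑) ∘ (√·) ∘ hA.1.eigenvalues) *
    (star hA.1.eigenvectorUnitary : Matrix n n 𝕜)

open Matrix

section Aux
variable {N : Type*} [Fintype N] [DecidableEq N]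



lemma auxPosDefConj (U : Matrix.unitaryGroup N ℝ) {d : N → ℝ} (hd : ∀ i, 0 < d i) :
    ((U : Matrix N N ℝ) * Matrix.diagonal d * star (U : Matrix N N ℝ)).PosDef := by
  set V := (U : Matrix N N ℝ) with hV
  have hUV : V * star V = 1 := Unitary.coe_mul_star_self U
  have hherm : (V * diagonal d * star V).IsHermitian := by
    have : ∀ i, d i = star (d i) := fun i => rfl
    unfold Matrix.IsHermitian
    simp [Matrix.star_eq_conjTranspose, Matrix.conjTranspose_mul, Matrix.mul_assoc,
      Matrix.diagonal_conjTranspose]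
  refine Matrix.PosDef.of_dotProduct_mulVec_pos hherm fun x hx => ?_
  set y := star V *ᵥ x with hy
  have hyne : y ≠ 0 := by
    intro h
    apply hx
    have : x = V *ᵥ y := by
      rw [hy, Matrix.mulVec_mulVec, hUV, Matrix.one_mulVec]
    rw [this, h, Matrix.mulVec_zero]
  have h1 : star y = star x ᵥ* V := by
    rw [hy, star_mulVec]
    simp [Matrix.star_eq_conjTranspose]
  have key : star x ⬝ᵥ (V * diagonal d * star V) *ᵥ x = star y ⬝ᵥ diagonal d *ᵥ y := by
    rw [← Matrix.mulVec_mulVec, ← Matrix.mulVec_mulVec, Matrix.dotProduct_mulVec, ← h1]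
  rw [key]
  exact (Matrix.PosDef.diagonal hd).dotProduct_mulVec_pos hyne



lemma auxNormDiagonal [Nonempty N] (d : N → ℝ) :
    ‖(Matrix.diagonal d : Matrix N N ℝ)‖ =
      Finset.univ.sup' Finset.univ_nonempty (fun i => |d i|) := by
  set K := Finset.univ.sup' Finset.univ_nonempty (fun i => |d i|) with hK
  have hK0 : 0 ≤ K := le_trans (abs_nonneg (d (Classical.arbitrary N)))
    (Finset.le_sup' (fun i => |d i|) (Finset.mem_univ (Classical.arbitrary N)))
  apply le_antisymm
  · rw [Matrix.l2_opNorm_def]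
    apply ContinuousLinearMap.opNorm_le_bound _ hK0
    intro x
    have hx : ((Matrix.toEuclideanLin.trans LinearMap.toContinuousLinearMap) (diagonal d)) x
        = (WithLp.equiv 2 _).symm ((diagonal d) *ᵥ (WithLp.equiv 2 _ x)) := rfl
    rw [hx]
    rw [EuclideanSpace.norm_eq, EuclideanSpace.norm_eq]
    rw [← Real.sqrt_sq hK0, ← Real.sqrt_mul (sq_nonneg K), Finset.mul_sum]
    apply Real.sqrt_le_sqrt
    apply Finset.sum_le_sum
    intro i _
    have : ‖(WithLp.equiv 2 (N → ℝ)).symm (diagonal d *ᵥ (WithLp.equiv 2 (N → ℝ)) x) i‖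
        = |d i * x i| := by
      simp [Matrix.mulVec_diagonal]
    rw [this]
    have hxi : ‖x i‖ = |x i| := rfl
    rw [hxi, abs_mul, mul_pow, sq_abs, sq_abs]
    have : (d i)^2 ≤ K^2 := by
      rw [← sq_abs]
      apply pow_le_pow_left₀ (abs_nonneg _)
      exact Finset.le_sup' (fun j => |d j|) (Finset.mem_univ i)
    nlinarith [sq_nonneg (x i)]
  · apply Finset.sup'_le
    intro i _
    have := Matrix.l2_opNorm_mulVec (diagonal d) (EuclideanSpace.single i (1:ℝ))
    have h1 : (diagonal d) *ᵥ (EuclideanSpace.single i (1:ℝ) : EuclideanSpace ℝ N)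
        = Pi.single i (d i) := by
      have : ((EuclideanSpace.single i (1:ℝ) : EuclideanSpace ℝ N) : N → ℝ) = Pi.single i 1 := by
        ext j; simp [EuclideanSpace.single_apply, Pi.single_apply, eq_comm]
      rw [show ((EuclideanSpace.single i (1:ℝ) : EuclideanSpace ℝ N)) = ((Pi.single i 1 : N → ℝ) : N → ℝ) from this]
      rw [Matrix.diagonal_mulVec_single]
      simp
    rw [h1] at this
    have h2 : ‖(EuclideanSpace.equiv N ℝ).symm (Pi.single i (d i))‖ = |d i| := by
      have : (EuclideanSpace.equiv N ℝ).symm (Pi.single i (d i)) = EuclideanSpace.single i (d i) := by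
        rfl
      rw [this, EuclideanSpace.norm_single]
      rfl
    have h3 : ‖(EuclideanSpace.single i (1:ℝ) : EuclideanSpace ℝ N)‖ = 1 := by
      rw [EuclideanSpace.norm_single]; simp
    rw [h2, h3, mul_one] at this
    exact this

open scoped MatrixOrder in
lemma auxSqrtEq {A B : Matrix N N ℝ} (hA : A.PosSemidef) (hB : B.PosSemidef) (h : B ^ 2 = A) :
    hA.sqrt = B := by
  have e1 : hA.sqrt = hA.1.cfc Real.sqrt := by
    rw [Matrix.IsHermitian.cfc, Unitary.conjStarAlgAut_apply]; rfl
  rw [e1, ← hA.1.cfc_eq, ← cfcₙ_eq_cfc, ← CFC.sqrt_eq_real_sqrt A hA.nonneg]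
  exact CFC.sqrt_unique (by rw [← sq]; exact h) hB.nonneg

end Aux

/-- For an `n × n` real symmetric positive definite matrix `C` and `t > 0`, the matrix
`M = I − exp(−2t·C⁻¹)` is symmetric positive definite, its unique symmetric positive semidefinite
square root is invertible, and `‖(M^{1/2})⁻¹‖ = (1 − e^{−2t/‖C‖})^{−1/2}`. -/
theorem norm_inv_sqrt_one_sub_exp_neg_smul_inv {n : ℕ} (hn : 0 < n)
    (C : Matrix (Fin n) (Fin n) ℝ) (hC : C.PosDef) (t : ℝ) (ht : 0 < t) :
    ∃ hM : (1 - NormedSpace.exp ((-(2 * t)) • C⁻¹)).PosDef,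
      IsUnit hM.posSemidef.sqrt ∧
      ‖(hM.posSemidef.sqrt)⁻¹‖ = (1 - Real.exp (-(2 * t) / ‖C‖)) ^ (-(1 / 2) : ℝ) := by
  classical
  haveI : Nonempty (Fin n) := ⟨⟨0, hn⟩⟩
  have hHerm := hC.1
  set μ := hHerm.eigenvalues with hμdef
  set U := hHerm.eigenvectorUnitary with hUdef
  set V := (U : Matrix (Fin n) (Fin n) ℝ) with hVdef
  have hμpos : ∀ i, 0 < μ i := hC.eigenvalues_pos
  have hVU : star V * V = 1 := Unitary.coe_star_mul_self U
  have hUV : V * star V = 1 := Unitary.coe_mul_star_self U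
  set f : (Fin n → ℝ) → Matrix (Fin n) (Fin n) ℝ :=
    fun d => V * Matrix.diagonal d * star V with hf
  -- algebraic properties of f
  have hmul : ∀ d e : Fin n → ℝ, f d * f e = f (d * e) := by
    intro d e
    calc f d * f e = V * (Matrix.diagonal d * ((star V * V) * (Matrix.diagonal e * star V))) := by
          simp only [hf, Matrix.mul_assoc]
      _ = f (d * e) := by
          rw [hVU, one_mul, ← Matrix.mul_assoc (Matrix.diagonal d), diagonal_mul_diagonal]
          simp only [hf, Matrix.mul_assoc]
          rfl
  have hone : f 1 = 1 := by
    show V * Matrix.diagonal (1 : Fin n → ℝ) * star V = 1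
    rw [show Matrix.diagonal (1 : Fin n → ℝ) = 1 from Matrix.diagonal_one, Matrix.mul_one, hUV]
  have hsub : ∀ d e : Fin n → ℝ, f d - f e = f (d - e) := by
    intro d e
    show V * Matrix.diagonal d * star V - V * Matrix.diagonal e * star V
      = V * Matrix.diagonal (d - e) * star V
    rw [← sub_mul, ← mul_sub, Matrix.diagonal_sub]
    rfl
  have hsmulf : ∀ (c : ℝ) (d : Fin n → ℝ), c • f d = f (c • d) := by
    intro c d
    show c • (V * Matrix.diagonal d * star V) = V * Matrix.diagonal (c • d) * star V
    rw [Matrix.diagonal_smul, mul_smul_comm, smul_mul_assoc]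
  -- spectral decomposition of C
  have hC_eq : C = f μ := by
    have := hHerm.spectral_theorem
    rwa [RCLike.ofReal_real_eq_id, Function.id_comp] at this
  have hCinv : C⁻¹ = f μ⁻¹ := by
    apply Matrix.inv_eq_right_inv
    rw [hC_eq, hmul]
    rw [show μ * μ⁻¹ = 1 from funext fun i => mul_inv_cancel₀ (hμpos i).ne']
    exact hone
  -- exponential
  have hu : IsUnit V := ⟨Unitary.toUnits U, rfl⟩
  have hVinv : V⁻¹ = star V := Matrix.inv_eq_left_inv hVU
  have hexp : ∀ d : Fin n → ℝ,
      NormedSpace.exp (f d) = f (fun i => Real.exp (d i)) := by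
    intro d
    have h1 := Matrix.exp_conj V (Matrix.diagonal d) hu
    rw [hVinv] at h1
    show NormedSpace.exp (V * Matrix.diagonal d * star V)
      = V * Matrix.diagonal (fun i => Real.exp (d i)) * star V
    rw [h1, Matrix.exp_diagonal, Pi.exp_def]
    simp_rw [← Real.exp_eq_exp_ℝ]
  set g : Fin n → ℝ := fun i => 1 - Real.exp (-(2 * t) * (μ i)⁻¹) with hg
  have hgpos : ∀ i, 0 < g i := by
    intro i
    have : -(2 * t) * (μ i)⁻¹ < 0 :=
      mul_neg_of_neg_of_pos (by linarith) (inv_pos.2 (hμpos i))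
    simpa [hg, sub_pos] using Real.exp_lt_one_iff.mpr this
  have hM_eq : 1 - NormedSpace.exp ((-(2 * t)) • C⁻¹) = f g := by
    have harg : (1 : Fin n → ℝ) - (fun i => Real.exp (((-(2 * t)) • μ⁻¹) i)) = g := by
      funext i
      simp [hg]
    rw [hCinv, hsmulf, hexp, ← hone, hsub, harg]
  have hM : (1 - NormedSpace.exp ((-(2 * t)) • C⁻¹)).PosDef := by
    rw [hM_eq]; exact auxPosDefConj U hgpos
  set g2 : Fin n → ℝ := fun i => Real.sqrt (g i) with hg2
  have hg2pos : ∀ i, 0 < g2 i := fun i => Real.sqrt_pos.2 (hgpos i)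
  have hSpd : (f g2).PosDef := auxPosDefConj U hg2pos
  have hSsq : (f g2) ^ 2 = 1 - NormedSpace.exp ((-(2 * t)) • C⁻¹) := by
    rw [pow_two, hmul, hM_eq,
      show g2 * g2 = g from funext fun i => Real.mul_self_sqrt (hgpos i).le]
  have hsqrt_eq : hM.posSemidef.sqrt = f g2 :=
    auxSqrtEq hM.posSemidef hSpd.posSemidef hSsq
  refine ⟨hM, ?_, ?_⟩
  · rw [hsqrt_eq]; exact hSpd.isUnit
  set d' : Fin n → ℝ := fun i => (g2 i)⁻¹ with hd'
  have hd'pos : ∀ i, 0 < d' i := fun i => inv_pos.2 (hg2pos i)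
  have hSinv : (f g2)⁻¹ = f d' := by
    apply Matrix.inv_eq_right_inv
    rw [hmul, show g2 * d' = 1 from funext fun i => mul_inv_cancel₀ (hg2pos i).ne']
    exact hone
  have hnorm_f : ∀ e : Fin n → ℝ,
      ‖f e‖ = Finset.univ.sup' Finset.univ_nonempty (fun i => |e i|) := by
    intro e
    calc ‖f e‖ = ‖(V : Matrix (Fin n) (Fin n) ℝ) * (Matrix.diagonal e * star V)‖ := by
          rw [show f e = V * Matrix.diagonal e * star V from rfl, Matrix.mul_assoc]
      _ = ‖Matrix.diagonal e * star V‖ := CStarRing.norm_coe_unitary_mul U _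
      _ = ‖(Matrix.diagonal e : Matrix (Fin n) (Fin n) ℝ)‖ := by
          rw [← Unitary.coe_star]
          exact CStarRing.norm_mul_coe_unitary _ _
      _ = _ := auxNormDiagonal e
  obtain ⟨i₀, -, hmax⟩ := Finset.exists_max_image Finset.univ μ
    ⟨Classical.arbitrary _, Finset.mem_univ _⟩
  have hmax' : ∀ j, μ j ≤ μ i₀ := fun j => hmax j (Finset.mem_univ j)
  have hnormC : ‖C‖ = μ i₀ := by
    rw [hC_eq, hnorm_f]
    apply le_antisymm
    · exact Finset.sup'_le _ _ fun j _ => by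
        rw [abs_of_pos (hμpos j)]; exact hmax' j
    · exact le_trans (le_abs_self _) (Finset.le_sup' (fun i => |μ i|) (Finset.mem_univ i₀))
  have hd'mono : ∀ j, d' j ≤ d' i₀ := by
    intro j
    have hinv : (μ i₀)⁻¹ ≤ (μ j)⁻¹ := by
      gcongr
      · exact hμpos j
      · exact hmax' j
    have harg : -(2 * t) * (μ j)⁻¹ ≤ -(2 * t) * (μ i₀)⁻¹ := by nlinarith
    have hgle : g i₀ ≤ g j := by
      have := Real.exp_le_exp.mpr harg
      simp only [hg]
      linarith
    have hsq : g2 i₀ ≤ g2 j := Real.sqrt_le_sqrt hgle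
    simp only [hd']
    gcongr
    exact hg2pos i₀
  have hnormS : ‖(f g2)⁻¹‖ = d' i₀ := by
    rw [hSinv, hnorm_f]
    apply le_antisymm
    · exact Finset.sup'_le _ _ fun j _ => by
        rw [abs_of_pos (hd'pos j)]; exact hd'mono j
    · exact le_trans (le_abs_self _) (Finset.le_sup' (fun i => |d' i|) (Finset.mem_univ i₀))
  rw [hsqrt_eq, hnormS, hnormC, div_eq_mul_inv,
    Real.rpow_neg (by exact (hgpos i₀).le), ← Real.sqrt_eq_rpow]
end

section
/- For all real numbers c > 0, Φ > 0 and K > 0, there exists u > 0 such that (Φ/2)·∫₀ᵘ e^{−2t/c} dt + K·∫ᵤ^∞ e^{−4t/c} / (1 − e^{−2t/c}) dt ≤ (c·K/2)·log(1 + Φ/K). -/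
open MeasureTheory

/-- For `c, Φ, K > 0` there exists `u > 0` such that
`(Φ/2)·∫₀ᵘ e^{−2t/c} dt + K·∫ᵤ^∞ e^{−4t/c}/(1 − e^{−2t/c}) dt ≤ (cK/2)·log(1 + Φ/K)`. -/
theorem hsi_optimization_bound (c Φ K : ℝ) (hc : 0 < c) (hΦ : 0 < Φ) (hK : 0 < K) :
    ∃ u : ℝ, 0 < u ∧
      (Φ / 2) * (∫ t in (0 : ℝ)..u, Real.exp (-2 * t / c))
        + K * (∫ t in Set.Ioi u, Real.exp (-4 * t / c) / (1 - Real.exp (-2 * t / c)))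
      ≤ (c * K / 2) * Real.log (1 + Φ / K) := by
  have hΦK : 0 < Φ + K := by linarith
  have hlog_pos : 0 < Real.log (1 + K / Φ) := Real.log_pos (by
    have : 0 < K / Φ := div_pos hK hΦ; linarith)
  set u : ℝ := c / 2 * Real.log (1 + K / Φ) with hu_def
  have hu : 0 < u := by positivity
  refine ⟨u, hu, ?_⟩
  set a : ℝ := Φ / (Φ + K) with ha_def
  have ha0 : 0 < a := div_pos hΦ hΦK
  have ha1 : a < 1 := (div_lt_one hΦK).mpr (by linarith)
  -- exp(-2u/c) = a
  have hea : Real.exp (-2 * u / c) = a := by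
    have h1 : -2 * u / c = - Real.log (1 + K / Φ) := by
      rw [hu_def]; field_simp
    have h2 : (1 : ℝ) + K / Φ = (Φ + K) / Φ := by
      rw [add_div, div_self hΦ.ne']
    rw [h1, Real.exp_neg, Real.exp_log (by positivity), h2, inv_div, ha_def]
  -- exp(-2t/c) < 1 for t > 0
  have hlt1 : ∀ t : ℝ, 0 < t → Real.exp (-2 * t / c) < 1 := by
    intro t ht
    have h2 : -2 * t / c < 0 := div_neg_of_neg_of_pos (by linarith) hc
    exact Real.exp_lt_one_iff.mpr h2
  -- first integral
  have hI1 : (∫ t in (0 : ℝ)..u, Real.exp (-2 * t / c)) = c / 2 * (1 - a) := by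
    have h : ∀ t : ℝ, HasDerivAt (fun s => -(c / 2) * Real.exp (-2 * s / c))
        (Real.exp (-2 * t / c)) t := by
      intro t
      have h1 : HasDerivAt (fun s : ℝ => -2 * s / c) (-2 / c) t := by
        simpa using ((hasDerivAt_id t).const_mul (-2 : ℝ)).div_const c
      have h2 := (h1.exp).const_mul (-(c / 2))
      refine h2.congr_deriv ?_
      field_simp
    rw [intervalIntegral.integral_eq_sub_of_hasDerivAt (fun t _ => h t)
        ((Real.continuous_exp.comp (by continuity)).intervalIntegrable 0 u)]
    show -(c / 2) * Real.exp (-2 * u / c) - -(c / 2) * Real.exp (-2 * 0 / c) = c / 2 * (1 - a)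
    rw [hea, show -2 * (0 : ℝ) / c = 0 by ring, Real.exp_zero]
    ring
  -- second integral
  have hI2 : (∫ t in Set.Ioi u, Real.exp (-4 * t / c) / (1 - Real.exp (-2 * t / c)))
      = -(c / 2) * (a + Real.log (1 - a)) := by
    set F : ℝ → ℝ := fun t => c / 2 * (Real.exp (-2 * t / c) + Real.log (1 - Real.exp (-2 * t / c)))
      with hF
    have hderiv : ∀ t ∈ Set.Ici u, HasDerivAt F
        (Real.exp (-4 * t / c) / (1 - Real.exp (-2 * t / c))) t := by
      intro t ht
      have ht0 : 0 < t := lt_of_lt_of_le hu ht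
      have hx1 : Real.exp (-2 * t / c) < 1 := hlt1 t ht0
      have hx0 : 0 < Real.exp (-2 * t / c) := Real.exp_pos _
      have hne : (1 : ℝ) - Real.exp (-2 * t / c) ≠ 0 := by linarith
      have h1 : HasDerivAt (fun s : ℝ => -2 * s / c) (-2 / c) t := by
        simpa using ((hasDerivAt_id t).const_mul (-2 : ℝ)).div_const c
      have hexp : HasDerivAt (fun s : ℝ => Real.exp (-2 * s / c))
          (Real.exp (-2 * t / c) * (-2 / c)) t := h1.exp
      have hsub : HasDerivAt (fun s : ℝ => 1 - Real.exp (-2 * s / c))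
          (-(Real.exp (-2 * t / c) * (-2 / c))) t := by
        exact ((hasDerivAt_const t (1 : ℝ)).sub hexp).congr_deriv (by ring)
      have hlog : HasDerivAt (fun s : ℝ => Real.log (1 - Real.exp (-2 * s / c)))
          (-(Real.exp (-2 * t / c) * (-2 / c)) / (1 - Real.exp (-2 * t / c))) t :=
        hsub.log hne
      have h3 := (hexp.add hlog).const_mul (c / 2)
      refine h3.congr_deriv ?_
      have h4 : Real.exp (-4 * t / c) = Real.exp (-2 * t / c) * Real.exp (-2 * t / c) := by
        rw [← Real.exp_add]; congr 1; field_simp; ring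
      rw [h4]
      generalize Real.exp (-2 * t / c) = x at hne ⊢
      field_simp [hne]
      ring
    have hpos : ∀ t ∈ Set.Ioi u, 0 ≤ Real.exp (-4 * t / c) / (1 - Real.exp (-2 * t / c)) := by
      intro t ht
      have ht0 : 0 < t := lt_trans hu ht
      have hx1 : Real.exp (-2 * t / c) < 1 := hlt1 t ht0
      exact div_nonneg (Real.exp_pos _).le (by linarith)
    have hx : Filter.Tendsto (fun t : ℝ => Real.exp (-2 * t / c)) Filter.atTop (nhds 0) := by
      have h1 : Filter.Tendsto (fun t : ℝ => 2 / c * t) Filter.atTop Filter.atTop :=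
        Filter.Tendsto.const_mul_atTop (by positivity) Filter.tendsto_id
      have h2 := Real.tendsto_exp_neg_atTop_nhds_zero.comp h1
      exact h2.congr (fun t => by simp only [Function.comp_apply]; congr 1; ring)
    have htend : Filter.Tendsto F Filter.atTop (nhds 0) := by
      have hcont : Filter.Tendsto (fun x : ℝ => c / 2 * (x + Real.log (1 - x))) (nhds 0)
          (nhds 0) := by
        have hca : ContinuousAt (fun x : ℝ => c / 2 * (x + Real.log (1 - x))) 0 := by
          apply ContinuousAt.mul continuousAt_const
          apply ContinuousAt.add continuousAt_id
          apply ContinuousAt.log (by fun_prop)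
          norm_num
        simpa using hca.tendsto
      exact hcont.comp hx
    rw [MeasureTheory.integral_Ioi_of_hasDerivAt_of_nonneg' hderiv hpos htend]
    show 0 - c / 2 * (Real.exp (-2 * u / c) + Real.log (1 - Real.exp (-2 * u / c)))
      = -(c / 2) * (a + Real.log (1 - a))
    rw [hea]; ring
  rw [hI1, hI2]
  -- value of log(1 - a)
  have h1a : 1 - a = K / (Φ + K) := by rw [ha_def]; field_simp; ring
  have hlog1a : Real.log (1 - a) = - Real.log (1 + Φ / K) := by
    rw [h1a, Real.log_div hK.ne' hΦK.ne',
      show (1 : ℝ) + Φ / K = (Φ + K) / K by rw [add_div, div_self hK.ne']; ring,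
      Real.log_div hΦK.ne' hK.ne']
    ring
  rw [hlog1a]
  have ha_eq : a * (Φ + K) = Φ := by rw [ha_def]; field_simp
  have key : Φ * c / 4 * (1 - a) ≤ K * c / 2 * a := by
    rw [← mul_le_mul_iff_of_pos_right hΦK]
    have h1 : (1 - a) * (Φ + K) = K := by nlinarith [ha_eq]
    calc Φ * c / 4 * (1 - a) * (Φ + K) = Φ * c / 4 * ((1 - a) * (Φ + K)) := by ring
      _ = Φ * c / 4 * K := by rw [h1]
      _ ≤ K * c / 2 * Φ := by nlinarith [mul_pos (mul_pos hΦ hc) hK]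
      _ = K * c / 2 * (a * (Φ + K)) := by rw [ha_eq]
      _ = K * c / 2 * a * (Φ + K) := by ring
  nlinarith [key]
end
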